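/- There exists an absolute constant c > 0 such that for every n ∈ ℕ and every trigonometric polynomial t_{n−1} of degree at most n−1: max_{t ∈ [−π,π]} |(V_{2n}(t) − V_n(t)) − t_{n−1}(t)| ≥ c·n. -/

import Mathlib

open Real Finset MeasureTheory

/-- The Dirichlet kernel `D_k(t) = 1/2 + Σ_{ν=1}^{k} cos(νt)`. -/
noncomputable def dirichletK (k : ℕ) (t : ℝ) : ℝ :=
  1 / 2 + ∑ ν ∈ Finset.Icc 1 k, Real.cos ((ν : ℝ) * t)

/-- The de la Vallée Poussin kernel `V_m(t) = (1/m) Σ_{k=m}^{2m−1} D_k(t)`. -/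
noncomputable def vallee (m : ℕ) (t : ℝ) : ℝ :=
  (1 / (m : ℝ)) * ∑ k ∈ Finset.Icc m (2 * m - 1), dirichletK k t

/-- A trigonometric polynomial of degree at most `m`:
`T(x) = a₀/2 + Σ_{k=1}^{m} (a_k cos kx + b_k sin kx)`. -/
def IsTrigPoly (m : ℕ) (T : ℝ → ℝ) : Prop :=
  ∃ a b : ℕ → ℝ, ∀ x : ℝ,
    T x = a 0 / 2 + ∑ k ∈ Finset.Icc 1 m, (a k * Real.cos ((k : ℝ) * x) + b k * Real.sin ((k : ℝ) * x))

/-!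
The functional `L f = f 0 - (∫ f V_n) / π`, point evaluation minus the de la Vallée Poussin
mean at `0`, vanishes on trigonometric polynomials of degree `≤ n` because `V_n` reproduces
them, and `|L f| ≤ 4 ‖f‖∞` because `∫ |V_n| ≤ 3π`, as `V_n = 2 F_{2n} - F_n` with nonnegative
Fejér kernels `F`. On `V_{2n} - V_n` it equals `(∫ V_n²) / π`, since `V_{2n}(0) = 2 V_n(0)` and
`V_{2n}` reproduces `V_n`; expanding `0 ≤ ∫ (V_n - D_n)²` gives `(∫ V_n²) / π ≥ D_n(0) = n + 1/2`.
Hence `n ≤ 4 ‖V_{2n} - V_n - T‖∞`.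
-/

open intervalIntegral

lemma integral_symm_eq_zero_of_odd {f : ℝ → ℝ} (hf : ∀ x, f (-x) = -f x) (a : ℝ) :
    ∫ x in -a..a, f x = 0 := by
  have h := integral_comp_neg (a := -a) (b := a) f
  simp only [neg_neg, hf, intervalIntegral.integral_neg] at h
  linarith

lemma integral_cos_int_mul (z : ℤ) :
    ∫ t in -π..π, cos (z * t) = if z = 0 then 2 * π else 0 := by
  split_ifs with hz
  · simp [hz]; ring
  · rw [integral_comp_mul_left (fun x => cos x) (Int.cast_ne_zero.mpr hz), integral_cos]
    simp [Real.sin_int_mul_pi]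

lemma integral_cos_mul_cos (j k : ℕ) :
    ∫ t in -π..π, cos (j * t) * cos (k * t)
      = if j = k then (if k = 0 then 2 * π else π) else 0 := by
  have h : ∀ t : ℝ, cos (j * t) * cos (k * t)
      = (cos (((j - k : ℤ) : ℝ) * t) + cos (((j + k : ℤ) : ℝ) * t)) / 2 := by
    intro t; push_cast; rw [sub_mul, add_mul, cos_sub, cos_add]; ring
  simp_rw [h]
  rw [intervalIntegral.integral_div,
    intervalIntegral.integral_add (Continuous.intervalIntegrable (by fun_prop) _ _)
      (Continuous.intervalIntegrable (by fun_prop) _ _),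
    integral_cos_int_mul, integral_cos_int_mul]
  split_ifs <;> first | omega | ring

lemma integral_sin_mul_eq_zero_of_even {f : ℝ → ℝ} (hf : ∀ x, f (-x) = f x) (c : ℝ) :
    ∫ t in -π..π, sin (c * t) * f t = 0 :=
  integral_symm_eq_zero_of_odd (fun x => by simp [hf, Real.sin_neg]) π

def trigPolySpace (N : ℕ) : Submodule ℝ (ℝ → ℝ) :=
  Submodule.span ℝ {f | ∃ k ≤ N, f = (fun t => cos (k * t)) ∨ f = (fun t => sin (k * t))}

namespace trigPolySpace

lemma mono {M N : ℕ} (h : M ≤ N) : trigPolySpace M ≤ trigPolySpace N :=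
  Submodule.span_mono fun _ ⟨k, hk, hf⟩ => ⟨k, hk.trans h, hf⟩

lemma cos_mem {k N : ℕ} (hk : k ≤ N) : (fun t => cos (k * t)) ∈ trigPolySpace N :=
  Submodule.subset_span ⟨k, hk, Or.inl rfl⟩

lemma sin_mem {k N : ℕ} (hk : k ≤ N) : (fun t => sin (k * t)) ∈ trigPolySpace N :=
  Submodule.subset_span ⟨k, hk, Or.inr rfl⟩

end trigPolySpace

lemma continuous_of_mem_trigPolySpace {N : ℕ} {f : ℝ → ℝ} (hf : f ∈ trigPolySpace N) :
    Continuous f := by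
  induction hf using Submodule.span_induction with
  | mem f hf =>
    obtain ⟨k, -, rfl | rfl⟩ := hf <;> fun_prop
  | zero => exact continuous_const
  | add f g _ _ hf hg => exact hf.add hg
  | smul c f _ hf => exact hf.const_smul c

lemma IsTrigPoly.mem_trigPolySpace {N : ℕ} {T : ℝ → ℝ} (hT : IsTrigPoly N T) :
    T ∈ trigPolySpace N := by
  obtain ⟨a, b, hT⟩ := hT
  have hT' : T = (a 0 / 2) • (fun t => cos ((0 : ℕ) * t)) + ∑ k ∈ Icc 1 N,
      (a k • (fun t => cos (k * t)) + b k • (fun t => sin (k * t))) := by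
    ext x; simp [hT, Finset.sum_apply]
  rw [hT']
  refine add_mem (Submodule.smul_mem _ _ (trigPolySpace.cos_mem (Nat.zero_le N)))
    (sum_mem fun k hk => add_mem ?_ ?_) <;> apply Submodule.smul_mem
  · exact trigPolySpace.cos_mem (mem_Icc.mp hk).2
  · exact trigPolySpace.sin_mem (mem_Icc.mp hk).2

lemma isTrigPoly_dirichletK (k : ℕ) : IsTrigPoly k (dirichletK k) :=
  ⟨fun _ => 1, fun _ => 0, fun x => by simp [dirichletK]⟩

lemma vallee_eq_smul_sum (m : ℕ) :
    vallee m = (1 / (m : ℝ)) • ∑ k ∈ Icc m (2 * m - 1), dirichletK k := by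
  ext t; simp [vallee, Finset.sum_apply]

lemma vallee_mem_trigPolySpace (m : ℕ) : vallee m ∈ trigPolySpace (2 * m - 1) := by
  rw [vallee_eq_smul_sum]
  exact Submodule.smul_mem _ _ (sum_mem fun k hk =>
    trigPolySpace.mono (mem_Icc.mp hk).2 (isTrigPoly_dirichletK k).mem_trigPolySpace)

@[fun_prop]
lemma continuous_dirichletK (k : ℕ) : Continuous (dirichletK k) :=
  continuous_of_mem_trigPolySpace (isTrigPoly_dirichletK k).mem_trigPolySpace

@[fun_prop]
lemma continuous_vallee (m : ℕ) : Continuous (vallee m) :=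
  continuous_of_mem_trigPolySpace (vallee_mem_trigPolySpace m)

lemma dirichletK_neg (k : ℕ) (t : ℝ) : dirichletK k (-t) = dirichletK k t := by
  simp [dirichletK]

lemma dirichletK_zero_right (k : ℕ) : dirichletK k 0 = k + 1 / 2 := by
  simp [dirichletK]; ring

lemma integral_cos_mul_dirichletK {j k : ℕ} (hj : j ≤ k) :
    ∫ t in -π..π, cos (j * t) * dirichletK k t = π := by
  simp_rw [dirichletK, mul_add, mul_sum]
  rw [intervalIntegral.integral_add (Continuous.intervalIntegrable (by fun_prop) _ _)
      (Continuous.intervalIntegrable (by fun_prop) _ _),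
    intervalIntegral.integral_finsetSum fun _ _ => Continuous.intervalIntegrable (by fun_prop) _ _,
    intervalIntegral.integral_mul_const]
  have h0 := integral_cos_int_mul j
  push_cast at h0
  simp only [h0, integral_cos_mul_cos]
  rw [sum_ite_eq]
  rcases Nat.eq_zero_or_pos j with rfl | hj0
  · simp; ring
  · simp [hj0.ne', hj]

lemma integral_mul_dirichletK {k : ℕ} {f : ℝ → ℝ} (hf : f ∈ trigPolySpace k) :
    ∫ t in -π..π, f t * dirichletK k t = π * f 0 := by
  induction hf using Submodule.span_induction with
  | mem f hf =>
    obtain ⟨j, hj, rfl | rfl⟩ := hf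
    · simp [integral_cos_mul_dirichletK hj]
    · simp [integral_sin_mul_eq_zero_of_even (dirichletK_neg k)]
  | zero => simp
  | add f g hf' hg' hf hg =>
    have := continuous_of_mem_trigPolySpace hf'
    have := continuous_of_mem_trigPolySpace hg'
    simp only [Pi.add_apply, add_mul]
    rw [intervalIntegral.integral_add (Continuous.intervalIntegrable (by fun_prop) _ _)
      (Continuous.intervalIntegrable (by fun_prop) _ _), hf, hg, mul_add]
  | smul c f _ hf =>
    simp only [Pi.smul_apply, smul_eq_mul, mul_assoc, intervalIntegral.integral_const_mul, hf]
    ring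

lemma integral_mul_vallee {m : ℕ} (hm : m ≠ 0) {f : ℝ → ℝ} (hf : f ∈ trigPolySpace m) :
    ∫ t in -π..π, f t * vallee m t = π * f 0 := by
  have := continuous_of_mem_trigPolySpace hf
  simp_rw [vallee, mul_left_comm (f _)]
  rw [intervalIntegral.integral_const_mul]
  simp_rw [mul_sum]
  rw [intervalIntegral.integral_finsetSum
      fun _ _ => Continuous.intervalIntegrable (by fun_prop) _ _,
    sum_congr rfl fun k hk => integral_mul_dirichletK (trigPolySpace.mono (mem_Icc.mp hk).1 hf),
    sum_const, Nat.card_Icc, nsmul_eq_mul, show 2 * m - 1 + 1 - m = m by omega]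
  field_simp

lemma integral_dirichletK (k : ℕ) : ∫ t in -π..π, dirichletK k t = π := by
  simpa using integral_cos_mul_dirichletK (Nat.zero_le k)

noncomputable def fejerK (M : ℕ) (t : ℝ) : ℝ :=
  (1 / (M : ℝ)) * ∑ k ∈ range M, dirichletK k t

lemma two_mul_one_sub_cos_mul_dirichletK (k : ℕ) (t : ℝ) :
    2 * (1 - cos t) * dirichletK k t = cos (k * t) - cos ((k + 1) * t) := by
  induction k with
  | zero => simp [dirichletK]; ring
  | succ k ih =>
    have hsum : dirichletK (k + 1) t = dirichletK k t + cos ((k + 1) * t) := by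
      rw [dirichletK, sum_Icc_succ_top (by omega), ← add_assoc, ← dirichletK]
      push_cast; rfl
    have hprod : cos (k * t) + cos ((k + 1 + 1) * t) = 2 * cos t * cos ((k + 1) * t) := by
      rw [show (k : ℝ) * t = (k + 1) * t - t by ring,
        show ((k : ℝ) + 1 + 1) * t = (k + 1) * t + t by ring, cos_sub, cos_add]
      ring
    rw [hsum, mul_add, ih]
    push_cast
    linarith

lemma fejerK_nonneg (M : ℕ) (t : ℝ) : 0 ≤ fejerK M t := by
  refine mul_nonneg (by positivity) ?_
  rcases (cos_le_one t).lt_or_eq with hlt | heq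
  · have htel : 2 * (1 - cos t) * ∑ k ∈ range M, dirichletK k t = 1 - cos (M * t) := by
      rw [mul_sum, sum_congr rfl fun k _ => two_mul_one_sub_cos_mul_dirichletK k t]
      simpa using sum_range_sub' (fun k : ℕ => cos (k * t)) M
    nlinarith [cos_le_one (M * t)]
  · obtain ⟨j, rfl⟩ := (cos_eq_one_iff t).mp heq
    refine sum_nonneg fun k _ => ?_
    have : ∀ ν : ℕ, cos (ν * (j * (2 * π))) = 1 := fun ν => by
      rw [← cos_int_mul_two_pi (ν * j)]; push_cast; ring_nf
    simp only [dirichletK, this]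
    positivity

@[fun_prop]
lemma continuous_fejerK (M : ℕ) : Continuous (fejerK M) := by
  unfold fejerK; fun_prop

lemma integral_fejerK {M : ℕ} (hM : M ≠ 0) : ∫ t in -π..π, fejerK M t = π := by
  simp only [fejerK]
  rw [intervalIntegral.integral_const_mul,
    intervalIntegral.integral_finsetSum fun _ _ => Continuous.intervalIntegrable (by fun_prop) _ _]
  simp only [integral_dirichletK, sum_const, card_range, nsmul_eq_mul]
  field_simp

lemma fejerK_zero_right (M : ℕ) : fejerK M 0 = M / 2 := by
  have hsum : ∑ k ∈ range M, dirichletK k 0 = M ^ 2 / 2 := by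
    induction M with
    | zero => simp
    | succ M ih => rw [sum_range_succ, ih, dirichletK_zero_right]; push_cast; ring
  rcases eq_or_ne M 0 with rfl | hM
  · simp [fejerK]
  · rw [fejerK, hsum]; field_simp

lemma vallee_eq_fejerK (m : ℕ) (t : ℝ) : vallee m t = 2 * fejerK (2 * m) t - fejerK m t := by
  rcases eq_or_ne m 0 with rfl | hm
  · simp [vallee, fejerK]
  · have hIco : Icc m (2 * m - 1) = Ico m (2 * m) := by
      rw [← Ico_add_one_right_eq_Icc]; congr 1; omega
    rw [vallee, fejerK, fejerK, hIco, sum_Ico_eq_sub _ (by omega)]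
    push_cast
    field_simp

lemma vallee_zero_right (m : ℕ) : vallee m 0 = 3 * m / 2 := by
  rw [vallee_eq_fejerK, fejerK_zero_right, fejerK_zero_right]; push_cast; ring

lemma abs_vallee_le (m : ℕ) (t : ℝ) : |vallee m t| ≤ 2 * fejerK (2 * m) t + fejerK m t := by
  have := fejerK_nonneg (2 * m) t
  have := fejerK_nonneg m t
  rw [vallee_eq_fejerK, abs_le]
  constructor <;> linarith

noncomputable def valleeMeanDefect (m : ℕ) (f : ℝ → ℝ) : ℝ :=
  f 0 - (∫ t in -π..π, f t * vallee m t) / π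

lemma abs_valleeMeanDefect_le {m : ℕ} (hm : m ≠ 0) {f : ℝ → ℝ} {S : ℝ}
    (hf : ∀ t ∈ Set.Icc (-π) π, |f t| ≤ S) : |valleeMeanDefect m f| ≤ 4 * S := by
  have hS : 0 ≤ S := (abs_nonneg _).trans (hf 0 ⟨by linarith [pi_pos], pi_pos.le⟩)
  have hmean : |∫ t in -π..π, f t * vallee m t| ≤ 3 * π * S := by
    calc |∫ t in -π..π, f t * vallee m t|
        ≤ ∫ t in -π..π, S * (2 * fejerK (2 * m) t + fejerK m t) := by
          rw [← Real.norm_eq_abs]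
          refine intervalIntegral.norm_integral_le_of_norm_le (by linarith [pi_pos])
            (Filter.Eventually.of_forall fun t ht => ?_)
            (Continuous.intervalIntegrable (by fun_prop) _ _)
          rw [Real.norm_eq_abs, abs_mul]
          exact mul_le_mul (hf t (Set.Ioc_subset_Icc_self ht)) (abs_vallee_le m t)
            (abs_nonneg _) hS
      _ = 3 * π * S := by
          rw [intervalIntegral.integral_const_mul, intervalIntegral.integral_add
            (Continuous.intervalIntegrable (by fun_prop) _ _)
            (Continuous.intervalIntegrable (by fun_prop) _ _),
            intervalIntegral.integral_const_mul, integral_fejerK (by omega), integral_fejerK hm]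
          ring
  calc |valleeMeanDefect m f|
      ≤ |f 0| + |∫ t in -π..π, f t * vallee m t| / π := by
        rw [valleeMeanDefect, ← abs_of_pos pi_pos, ← abs_div, abs_of_pos pi_pos]
        exact abs_sub _ _
    _ ≤ S + 3 * π * S / π := by
        gcongr
        exact hf 0 ⟨by linarith [pi_pos], pi_pos.le⟩
    _ = 4 * S := by field_simp; ring

lemma le_integral_vallee_sq_div_pi {m : ℕ} (hm : m ≠ 0) :
    m + 1 / 2 ≤ (∫ t in -π..π, vallee m t ^ 2) / π := by
  have hD : dirichletK m ∈ trigPolySpace m := (isTrigPoly_dirichletK m).mem_trigPolySpace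
  have hnonneg : 0 ≤ ∫ t in -π..π, (vallee m t - dirichletK m t) ^ 2 :=
    intervalIntegral.integral_nonneg (by linarith [pi_pos]) fun t _ => sq_nonneg _
  have hexpand : ∫ t in -π..π, (vallee m t - dirichletK m t) ^ 2
      = (∫ t in -π..π, vallee m t ^ 2) - 2 * (∫ t in -π..π, dirichletK m t * vallee m t)
        + ∫ t in -π..π, dirichletK m t * dirichletK m t := by
    rw [← intervalIntegral.integral_const_mul, ← intervalIntegral.integral_sub,
      ← intervalIntegral.integral_add]
    · congr 1; ext t; ring
    all_goals exact Continuous.intervalIntegrable (by fun_prop) _ _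
  rw [hexpand, integral_mul_vallee hm hD, integral_mul_dirichletK hD, dirichletK_zero_right]
    at hnonneg
  rw [le_div_iff₀ pi_pos]
  linarith

lemma valleeMeanDefect_vallee_sub_vallee_sub {n : ℕ} (hn : n ≠ 0) {T : ℝ → ℝ}
    (hT : T ∈ trigPolySpace n) :
    valleeMeanDefect n (fun t => vallee (2 * n) t - vallee n t - T t)
      = (∫ t in -π..π, vallee n t ^ 2) / π := by
  have := continuous_of_mem_trigPolySpace hT
  have hV : ∫ t in -π..π, vallee (2 * n) t * vallee n t = π * vallee n 0 := by
    simp_rw [mul_comm (vallee (2 * n) _)]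
    exact integral_mul_vallee (by omega)
      (trigPolySpace.mono (by omega) (vallee_mem_trigPolySpace n))
  have hsplit : ∫ t in -π..π, (vallee (2 * n) t - vallee n t - T t) * vallee n t
      = (∫ t in -π..π, vallee (2 * n) t * vallee n t) - (∫ t in -π..π, vallee n t ^ 2)
        - ∫ t in -π..π, T t * vallee n t := by
    rw [← intervalIntegral.integral_sub, ← intervalIntegral.integral_sub]
    · congr 1; ext t; ring
    all_goals exact Continuous.intervalIntegrable (by fun_prop) _ _
  rw [valleeMeanDefect, hsplit, hV, integral_mul_vallee hn hT, vallee_zero_right,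
    vallee_zero_right]
  field_simp
  push_cast
  ring

/-- There is an absolute constant `c > 0` such that for every `n ≥ 1` and
every trigonometric polynomial `T` of degree at most `n−1`:
`max_{t ∈ [−π,π]} |(V_{2n}(t) − V_n(t)) − T(t)| ≥ c·n`. -/
theorem vallee_diff_far_from_trigpoly :
    ∃ c : ℝ, 0 < c ∧ ∀ n : ℕ, 1 ≤ n → ∀ T : ℝ → ℝ, IsTrigPoly (n - 1) T →
      c * (n : ℝ) ≤
        sSup ((fun t => |vallee (2 * n) t - vallee n t - T t|) '' Set.Icc (-π) π) := by
  refine ⟨1 / 4, by norm_num, fun n hn T hT => ?_⟩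
  have hn0 : n ≠ 0 := by omega
  have hTn : T ∈ trigPolySpace n := trigPolySpace.mono (Nat.sub_le n 1) hT.mem_trigPolySpace
  set h : ℝ → ℝ := fun t => vallee (2 * n) t - vallee n t - T t
  have hcont : Continuous h := by
    have := continuous_of_mem_trigPolySpace hTn
    fun_prop
  have hsup : ∀ t ∈ Set.Icc (-π) π, |h t| ≤ sSup ((fun t => |h t|) '' Set.Icc (-π) π) :=
    fun t ht => le_csSup (isCompact_Icc.bddAbove_image hcont.abs.continuousOn)
      (Set.mem_image_of_mem _ ht)
  have hdefect := abs_valleeMeanDefect_le hn0 hsup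
  rw [valleeMeanDefect_vallee_sub_vallee_sub hn0 hTn] at hdefect
  linarith [le_integral_vallee_sq_div_pi hn0, le_abs_self ((∫ t in -π..π, vallee n t ^ 2) / π)]
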